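/- Set k = 5, h = 3. For z = (x,y) ∈ ℝ^5 × ℝ^3 write u = 2|x|^2, v = 4|y|^2, and let f(x,y) = (u − v)u^{3/4}/4 and g = ∇f/|∇f|. Then at every point z = (x,y) with u > v, div g(z) ≥ (2√2/343) · (√u − √v)/|z|^2. -/

import Mathlib

open MeasureTheory
open scoped RealInnerProductSpace ENNReal

noncomputable section

/-- Euclidean norm of the first (`ℝ^k`) component of `z = (x, y)`. -/
def nX (k h : ℕ) (z : EuclideanSpace ℝ (Fin (k + h))) : ℝ :=
  Real.sqrt (∑ i : Fin k, (z (Fin.castAdd h i)) ^ 2)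

/-- Euclidean norm of the second (`ℝ^h`) component of `z = (x, y)`. -/
def nY (k h : ℕ) (z : EuclideanSpace ℝ (Fin (k + h))) : ℝ :=
  Real.sqrt (∑ j : Fin h, (z (Fin.natAdd k j)) ^ 2)

/-- The Lawson cone `M_{kh}`. -/
def Mset (k h : ℕ) : Set (EuclideanSpace ℝ (Fin (k + h))) :=
  {z | nX k h z / Real.sqrt ((k : ℝ) - 1) = nY k h z / Real.sqrt ((h : ℝ) - 1)}

/-- The open region `K_{kh}` bounded by the Lawson cone. -/
def Kset (k h : ℕ) : Set (EuclideanSpace ℝ (Fin (k + h))) :=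
  {z | nX k h z / Real.sqrt ((k : ℝ) - 1) < nY k h z / Real.sqrt ((h : ℝ) - 1)}

/-- The cylinder `H_R = B_R^k × B_R^h`. -/
def Hset (k h : ℕ) (R : ℝ) : Set (EuclideanSpace ℝ (Fin (k + h))) :=
  {z | nX k h z < R ∧ nY k h z < R}

/-- The exceptional set `S` of pairs. -/
def S : Set (ℕ × ℕ) := {(3, 5), (2, 7), (2, 8), (2, 9), (2, 10), (2, 11)}

/-- Divergence of a vector field, as the trace of its derivative
(equivalently `∑ i, ∂ᵢ gᵢ`). -/
def divg {n : ℕ} (g : EuclideanSpace ℝ (Fin n) → EuclideanSpace ℝ (Fin n))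
    (z : EuclideanSpace ℝ (Fin n)) : ℝ :=
  LinearMap.trace ℝ _ (fderiv ℝ g z).toLinearMap

/-- `u = (h-1)|x|^2 = 2|x|^2` (here `(h,k) = (3,5)`). -/
def uu (z : EuclideanSpace ℝ (Fin (5 + 3))) : ℝ := 2 * nX 5 3 z ^ 2

/-- `v = (k-1)|y|^2 = 4|y|^2`. -/
def vv (z : EuclideanSpace ℝ (Fin (5 + 3))) : ℝ := 4 * nY 5 3 z ^ 2

/-- `f₊(x,y) = (u - v)·u^{3/4}/4`. -/
def fp (z : EuclideanSpace ℝ (Fin (5 + 3))) : ℝ :=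
  (uu z - vv z) * uu z ^ ((3 : ℝ) / 4) / 4

/-- `f₋(x,y) = (u - v)·v^{3/4}/4`. -/
def fm (z : EuclideanSpace ℝ (Fin (5 + 3))) : ℝ :=
  (uu z - vv z) * vv z ^ ((3 : ℝ) / 4) / 4


/-!
Up to the positive factor `u^{-1/4}/4`, `∇f` is `H = (7u - 3v)·(x, 0) - 8u·(0, y)`, so `g = H/|H|` with
`|H|^2 = M(u, v) = u (49u^2 - 10uv + 9v^2)/2`. Writing `g = σ(u, v)·(x, 0) + τ(u, v)·(0, y)`, and
using that `u` scales by `(1 + t)^2` along `z + t·(x, 0)` while `v` stays fixed (and symmetrically),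
`div g = 5σ + 3τ + 2u ∂ᵤσ + 2v ∂ᵥτ = 2u (u - v)(49u^2 - 72uv + 27v^2) / M^{3/2}`.
For `v < u` one has `M ≤ 49u^3/2` and `(49u^2 - 72uv + 27v^2)(2u + v) ≥ 2u^3`, which together with
`u - v = (√u - √v)(√u + √v)` and `|z|^2 = u/2 + v/4` give the bound.
-/

section Blocks

def projFst (k h : ℕ) : EuclideanSpace ℝ (Fin (k + h)) →L[ℝ] EuclideanSpace ℝ (Fin (k + h)) :=
  LinearMap.toContinuousLinearMap
    { toFun := fun w => WithLp.toLp 2 fun i => if (i : ℕ) < k then w i else 0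
      map_add' := fun w w' => by ext i; by_cases hi : (i : ℕ) < k <;> simp [hi]
      map_smul' := fun c w => by ext i; by_cases hi : (i : ℕ) < k <;> simp [hi] }

def projSnd (k h : ℕ) : EuclideanSpace ℝ (Fin (k + h)) →L[ℝ] EuclideanSpace ℝ (Fin (k + h)) :=
  ContinuousLinearMap.id ℝ _ - projFst k h

variable {k h : ℕ}

lemma projFst_apply (w : EuclideanSpace ℝ (Fin (k + h))) (i : Fin (k + h)) :
    projFst k h w i = if (i : ℕ) < k then w i else 0 := rfl

lemma projSnd_apply (w : EuclideanSpace ℝ (Fin (k + h))) (i : Fin (k + h)) :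
    projSnd k h w i = if (i : ℕ) < k then 0 else w i := by
  by_cases hi : (i : ℕ) < k <;> simp [projSnd, projFst_apply, hi]

@[simp] lemma projFst_castAdd (w : EuclideanSpace ℝ (Fin (k + h))) (i : Fin k) :
    projFst k h w (Fin.castAdd h i) = w (Fin.castAdd h i) := by simp [projFst_apply]

@[simp] lemma projFst_natAdd (w : EuclideanSpace ℝ (Fin (k + h))) (j : Fin h) :
    projFst k h w (Fin.natAdd k j) = 0 := by simp [projFst_apply]

@[simp] lemma projSnd_castAdd (w : EuclideanSpace ℝ (Fin (k + h))) (i : Fin k) :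
    projSnd k h w (Fin.castAdd h i) = 0 := by simp [projSnd_apply]

@[simp] lemma projSnd_natAdd (w : EuclideanSpace ℝ (Fin (k + h))) (j : Fin h) :
    projSnd k h w (Fin.natAdd k j) = w (Fin.natAdd k j) := by simp [projSnd_apply]

lemma projFst_add_projSnd (w : EuclideanSpace ℝ (Fin (k + h))) :
    projFst k h w + projSnd k h w = w := by
  simp [projSnd]

lemma trace_projFst : LinearMap.trace ℝ _ (projFst k h).toLinearMap = k := by
  rw [LinearMap.trace_eq_sum_inner _ (EuclideanSpace.basisFun _ ℝ), Fin.sum_univ_add]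
  simp [EuclideanSpace.inner_single_left]

lemma trace_projSnd : LinearMap.trace ℝ _ (projSnd k h).toLinearMap = h := by
  rw [LinearMap.trace_eq_sum_inner _ (EuclideanSpace.basisFun _ ℝ), Fin.sum_univ_add]
  simp [EuclideanSpace.inner_single_left]

lemma inner_projFst_projFst (a b : EuclideanSpace ℝ (Fin (k + h))) :
    ⟪projFst k h a, projFst k h b⟫ = ⟪projFst k h a, b⟫ := by
  simp [PiLp.inner_apply, Fin.sum_univ_add]

lemma inner_projSnd_projSnd (a b : EuclideanSpace ℝ (Fin (k + h))) :
    ⟪projSnd k h a, projSnd k h b⟫ = ⟪projSnd k h a, b⟫ := by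
  simp [PiLp.inner_apply, Fin.sum_univ_add]

lemma norm_sq_smul_projFst_add_smul_projSnd (a b : ℝ) (w : EuclideanSpace ℝ (Fin (k + h))) :
    ‖a • projFst k h w + b • projSnd k h w‖ ^ 2 = a ^ 2 * nX k h w ^ 2 + b ^ 2 * nY k h w ^ 2 := by
  rw [EuclideanSpace.norm_sq_eq, Fin.sum_univ_add, nX, nY, Real.sq_sqrt (by positivity),
    Real.sq_sqrt (by positivity)]
  simp [mul_pow, Finset.mul_sum]

lemma norm_projFst_sq (w : EuclideanSpace ℝ (Fin (k + h))) :
    ‖projFst k h w‖ ^ 2 = nX k h w ^ 2 := by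
  simpa using norm_sq_smul_projFst_add_smul_projSnd (1 : ℝ) 0 w

lemma norm_projSnd_sq (w : EuclideanSpace ℝ (Fin (k + h))) :
    ‖projSnd k h w‖ ^ 2 = nY k h w ^ 2 := by
  simpa using norm_sq_smul_projFst_add_smul_projSnd (0 : ℝ) 1 w

lemma norm_sq_eq_nX_sq_add_nY_sq (w : EuclideanSpace ℝ (Fin (k + h))) :
    ‖w‖ ^ 2 = nX k h w ^ 2 + nY k h w ^ 2 := by
  simpa [projFst_add_projSnd] using norm_sq_smul_projFst_add_smul_projSnd (1 : ℝ) 1 w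

lemma nX_add_smul_projFst (z : EuclideanSpace ℝ (Fin (k + h))) (t : ℝ) :
    nX k h (z + t • projFst k h z) = |1 + t| * nX k h z := by
  rw [nX, nX, ← Real.sqrt_sq_eq_abs, ← Real.sqrt_mul (sq_nonneg _), Finset.mul_sum]
  congr 1
  refine Finset.sum_congr rfl fun i _ => ?_
  simp only [PiLp.add_apply, PiLp.smul_apply, projFst_castAdd, smul_eq_mul]
  ring

lemma nY_add_smul_projFst (z : EuclideanSpace ℝ (Fin (k + h))) (t : ℝ) :
    nY k h (z + t • projFst k h z) = nY k h z := by
  simp [nY]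

lemma nX_add_smul_projSnd (z : EuclideanSpace ℝ (Fin (k + h))) (t : ℝ) :
    nX k h (z + t • projSnd k h z) = nX k h z := by
  simp [nX]

lemma nY_add_smul_projSnd (z : EuclideanSpace ℝ (Fin (k + h))) (t : ℝ) :
    nY k h (z + t • projSnd k h z) = |1 + t| * nY k h z := by
  rw [nY, nY, ← Real.sqrt_sq_eq_abs, ← Real.sqrt_mul (sq_nonneg _), Finset.mul_sum]
  congr 1
  refine Finset.sum_congr rfl fun j _ => ?_
  simp only [PiLp.add_apply, PiLp.smul_apply, projSnd_natAdd, smul_eq_mul]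
  ring

end Blocks

section Divergence

variable {n : ℕ} {z : EuclideanSpace ℝ (Fin n)}

lemma divg_add {V W : EuclideanSpace ℝ (Fin n) → EuclideanSpace ℝ (Fin n)}
    (hV : DifferentiableAt ℝ V z) (hW : DifferentiableAt ℝ W z) :
    divg (fun w => V w + W w) z = divg V z + divg W z := by
  simp [divg, fderiv_fun_add hV hW]

lemma divg_smul_clm {s : EuclideanSpace ℝ (Fin n) → ℝ} (hs : DifferentiableAt ℝ s z)
    (L : EuclideanSpace ℝ (Fin n) →L[ℝ] EuclideanSpace ℝ (Fin n)) :
    divg (fun w => s w • L w) z = s z * LinearMap.trace ℝ _ L.toLinearMap + fderiv ℝ s z (L z) := by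
  simp [divg, fderiv_fun_smul hs L.differentiableAt, LinearMap.trace_smulRight]

end Divergence

local notation "E" => EuclideanSpace ℝ (Fin (5 + 3))
local notation "X" => projFst 5 3
local notation "Y" => projSnd 5 3

lemma uu_eq_norm_sq (w : E) : uu w = 2 * ‖X w‖ ^ 2 := by rw [uu, norm_projFst_sq]

lemma vv_eq_norm_sq (w : E) : vv w = 4 * ‖Y w‖ ^ 2 := by rw [vv, norm_projSnd_sq]

lemma norm_sq_eq_uu_vv (w : E) : ‖w‖ ^ 2 = uu w / 2 + vv w / 4 := by
  rw [norm_sq_eq_nX_sq_add_nY_sq, uu, vv]; ring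

lemma hasGradientAt_uu (z : E) : HasGradientAt uu ((4 : ℝ) • X z) z := by
  rw [hasGradientAt_iff_hasFDerivAt, funext uu_eq_norm_sq]
  refine ((X).hasFDerivAt.norm_sq.const_mul 2).congr_fderiv ?_
  ext y
  simp only [smul_apply, ContinuousLinearMap.comp_apply, coe_innerSL_apply,
    nsmul_eq_mul, smul_eq_mul, map_smul, InnerProductSpace.toDual_apply_apply, inner_projFst_projFst]
  ring

lemma hasGradientAt_vv (z : E) : HasGradientAt vv ((8 : ℝ) • Y z) z := by
  rw [hasGradientAt_iff_hasFDerivAt, funext vv_eq_norm_sq]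
  refine ((Y).hasFDerivAt.norm_sq.const_mul 4).congr_fderiv ?_
  ext y
  simp only [smul_apply, ContinuousLinearMap.comp_apply, coe_innerSL_apply,
    nsmul_eq_mul, smul_eq_mul, map_smul, InnerProductSpace.toDual_apply_apply, inner_projSnd_projSnd]
  ring

@[fun_prop] lemma differentiable_uu : Differentiable ℝ uu :=
  fun w => (hasGradientAt_uu w).differentiableAt

@[fun_prop] lemma differentiable_vv : Differentiable ℝ vv :=
  fun w => (hasGradientAt_vv w).differentiableAt

lemma uu_add_smul_projFst (z : E) (t : ℝ) : uu (z + t • X z) = (1 + t) ^ 2 * uu z := by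
  rw [uu, uu, nX_add_smul_projFst, mul_pow, sq_abs]; ring

lemma vv_add_smul_projFst (z : E) (t : ℝ) : vv (z + t • X z) = vv z := by
  rw [vv, vv, nY_add_smul_projFst]

lemma uu_add_smul_projSnd (z : E) (t : ℝ) : uu (z + t • Y z) = uu z := by
  rw [uu, uu, nX_add_smul_projSnd]

lemma vv_add_smul_projSnd (z : E) (t : ℝ) : vv (z + t • Y z) = (1 + t) ^ 2 * vv z := by
  rw [vv, vv, nY_add_smul_projSnd, mul_pow, sq_abs]; ring

lemma fderiv_comp_uu_vv_projFst {Φ : ℝ → ℝ → ℝ} {Φ' : ℝ} {z : E}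
    (hd : DifferentiableAt ℝ (fun w => Φ (uu w) (vv w)) z)
    (hΦ : HasDerivAt (fun a => Φ a (vv z)) Φ' (uu z)) :
    fderiv ℝ (fun w => Φ (uu w) (vv w)) z (X z) = 2 * uu z * Φ' := by
  have hline : HasDerivAt (fun t : ℝ => (1 + t) ^ 2 * uu z) (2 * uu z) 0 := by
    simpa using (((hasDerivAt_id (0 : ℝ)).const_add 1).pow 2).mul_const (uu z)
  have hcurve : HasDerivAt (fun t : ℝ => Φ (uu (z + t • X z)) (vv (z + t • X z)))
      (2 * uu z * Φ') 0 := by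
    simp only [uu_add_smul_projFst, vv_add_smul_projFst]
    refine (hΦ.comp_of_eq 0 hline (by ring)).congr_deriv ?_
    ring
  rw [← hd.lineDeriv_eq_fderiv]
  exact HasLineDerivAt.lineDeriv hcurve

lemma fderiv_comp_uu_vv_projSnd {Φ : ℝ → ℝ → ℝ} {Φ' : ℝ} {z : E}
    (hd : DifferentiableAt ℝ (fun w => Φ (uu w) (vv w)) z)
    (hΦ : HasDerivAt (fun b => Φ (uu z) b) Φ' (vv z)) :
    fderiv ℝ (fun w => Φ (uu w) (vv w)) z (Y z) = 2 * vv z * Φ' := by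
  have hline : HasDerivAt (fun t : ℝ => (1 + t) ^ 2 * vv z) (2 * vv z) 0 := by
    simpa using (((hasDerivAt_id (0 : ℝ)).const_add 1).pow 2).mul_const (vv z)
  have hcurve : HasDerivAt (fun t : ℝ => Φ (uu (z + t • Y z)) (vv (z + t • Y z)))
      (2 * vv z * Φ') 0 := by
    simp only [uu_add_smul_projSnd, vv_add_smul_projSnd]
    refine (hΦ.comp_of_eq 0 hline (by ring)).congr_deriv ?_
    ring
  rw [← hd.lineDeriv_eq_fderiv]
  exact HasLineDerivAt.lineDeriv hcurve

def gradDir (w : E) : E := (7 * uu w - 3 * vv w) • X w + (-8 * uu w) • Y w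

def gradDirNormSq (a b : ℝ) : ℝ := a * (49 * a ^ 2 - 10 * a * b + 9 * b ^ 2) / 2

lemma gradDirNormSq_pos {a : ℝ} (b : ℝ) (ha : 0 < a) : 0 < gradDirNormSq a b := by
  have : 0 < 49 * a ^ 2 - 10 * a * b + 9 * b ^ 2 := by nlinarith [sq_nonneg (5 * a - 9 * b)]
  unfold gradDirNormSq; positivity

lemma norm_gradDir_sq (w : E) : ‖gradDir w‖ ^ 2 = gradDirNormSq (uu w) (vv w) := by
  rw [gradDir, norm_sq_smul_projFst_add_smul_projSnd, gradDirNormSq, uu, vv]; ring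

lemma hasGradientAt_fp {w : E} (hw : 0 < uu w) :
    HasGradientAt fp ((uu w ^ ((3 : ℝ) / 4 - 1) / 4) • gradDir w) w := by
  have hu := hasGradientAt_iff_hasFDerivAt.mp (hasGradientAt_uu w)
  have hv := hasGradientAt_iff_hasFDerivAt.mp (hasGradientAt_vv w)
  have hfp : fp = fun w => 4⁻¹ * ((uu w - vv w) * uu w ^ ((3 : ℝ) / 4)) := by
    funext w; rw [fp]; ring
  rw [hasGradientAt_iff_hasFDerivAt, hfp]
  refine (((hu.sub hv).fun_mul (hu.rpow_const (Or.inl hw.ne'))).const_mul 4⁻¹).congr_fderiv ?_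
  ext y
  have hpow : uu w ^ ((3 : ℝ) / 4) = uu w * uu w ^ ((3 : ℝ) / 4 - 1) := by
    rw [Real.rpow_sub_one hw.ne']; field_simp
  simp only [gradDir, hpow, Pi.sub_apply, map_add, map_smul, add_apply, smul_apply, sub_apply,
    InnerProductSpace.toDual_apply_apply, smul_eq_mul]
  ring

def coeffFst (a b : ℝ) : ℝ := (7 * a - 3 * b) / √(gradDirNormSq a b)

def coeffSnd (a b : ℝ) : ℝ := -8 * a / √(gradDirNormSq a b)

def unitField (w : E) : E := coeffFst (uu w) (vv w) • X w + coeffSnd (uu w) (vv w) • Y w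

lemma normalize_gradient_fp {w : E} (hw : 0 < uu w) :
    ‖gradient fp w‖⁻¹ • gradient fp w = unitField w := by
  have hc : 0 < uu w ^ ((3 : ℝ) / 4 - 1) / 4 := by positivity
  rw [(hasGradientAt_fp hw).gradient]
  change NormedSpace.normalize _ = _
  rw [NormedSpace.normalize_smul_of_pos hc, NormedSpace.normalize, ← Real.sqrt_sq (norm_nonneg _),
    norm_gradDir_sq, unitField, coeffFst, coeffSnd, gradDir, smul_add, smul_smul, smul_smul,
    inv_mul_eq_div, inv_mul_eq_div]

lemma differentiableAt_div_sqrt_gradDirNormSq {c : E → ℝ} {z : E} (hc : DifferentiableAt ℝ c z)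
    (hz : 0 < uu z) : DifferentiableAt ℝ (fun w => c w / √(gradDirNormSq (uu w) (vv w))) z := by
  have hM := gradDirNormSq_pos (vv z) hz
  have hMd : DifferentiableAt ℝ (fun w => gradDirNormSq (uu w) (vv w)) z := by
    unfold gradDirNormSq; fun_prop
  simp only [div_eq_mul_inv]
  exact hc.mul ((hMd.sqrt hM.ne').inv (Real.sqrt_pos.2 hM).ne')

lemma hasDerivAt_gradDirNormSq_fst (a b : ℝ) :
    HasDerivAt (fun a => gradDirNormSq a b) ((147 * a ^ 2 - 20 * a * b + 9 * b ^ 2) / 2) a := by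
  have hx := hasDerivAt_id' a
  refine ((hx.fun_mul (((hx.fun_pow 2).const_mul 49 |>.fun_sub
    ((hx.const_mul 10).mul_const b)).add_const (9 * b ^ 2))).div_const 2).congr_deriv ?_
  ring

lemma hasDerivAt_gradDirNormSq_snd (a b : ℝ) :
    HasDerivAt (fun b => gradDirNormSq a b) (a * (9 * b - 5 * a)) b := by
  have hx := hasDerivAt_id' b
  refine (((((hx.const_mul (10 * a)).const_sub (49 * a ^ 2)).add
    ((hx.fun_pow 2).const_mul 9)).const_mul a).div_const 2).congr_deriv ?_
  ring

lemma hasDerivAt_coeffFst {a : ℝ} (b : ℝ) (ha : 0 < a) :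
    HasDerivAt (fun a => coeffFst a b)
      ((7 * gradDirNormSq a b - (7 * a - 3 * b) * ((147 * a ^ 2 - 20 * a * b + 9 * b ^ 2) / 4)) /
        (gradDirNormSq a b * √(gradDirNormSq a b))) a := by
  have hM := gradDirNormSq_pos b ha
  have hsqrt := (hasDerivAt_gradDirNormSq_fst a b).sqrt hM.ne'
  refine ((((hasDerivAt_id' a).const_mul 7).sub_const (3 * b)).fun_div hsqrt
    (Real.sqrt_pos.2 hM).ne').congr_deriv ?_
  rw [Real.sq_sqrt hM.le]
  field_simp
  rw [Real.sq_sqrt hM.le]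
  ring

lemma hasDerivAt_coeffSnd (a : ℝ) {b : ℝ} (ha : 0 < a) :
    HasDerivAt (fun b => coeffSnd a b)
      (4 * a ^ 2 * (9 * b - 5 * a) / (gradDirNormSq a b * √(gradDirNormSq a b))) b := by
  have hM := gradDirNormSq_pos b ha
  have hsqrt := (hasDerivAt_gradDirNormSq_snd a b).sqrt hM.ne'
  refine ((hasDerivAt_const b (-8 * a)).fun_div hsqrt (Real.sqrt_pos.2 hM).ne').congr_deriv ?_
  rw [Real.sq_sqrt hM.le]
  field_simp
  rw [Real.sq_sqrt hM.le]
  ring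

def unitFieldDiv (u v : ℝ) : ℝ :=
  2 * u * (u - v) * (49 * u ^ 2 - 72 * u * v + 27 * v ^ 2) /
    (gradDirNormSq u v * √(gradDirNormSq u v))

lemma divg_unitField {z : E} (hz : 0 < uu z) : divg unitField z = unitFieldDiv (uu z) (vv z) := by
  have hσ : DifferentiableAt ℝ (fun w => coeffFst (uu w) (vv w)) z :=
    differentiableAt_div_sqrt_gradDirNormSq (by fun_prop) hz
  have hτ : DifferentiableAt ℝ (fun w => coeffSnd (uu w) (vv w)) z :=
    differentiableAt_div_sqrt_gradDirNormSq (by fun_prop) hz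
  rw [show unitField = fun w => coeffFst (uu w) (vv w) • X w + coeffSnd (uu w) (vv w) • Y w from rfl,
    divg_add (hσ.fun_smul (X).differentiableAt) (hτ.fun_smul (Y).differentiableAt),
    divg_smul_clm hσ, divg_smul_clm hτ, trace_projFst, trace_projSnd,
    fderiv_comp_uu_vv_projFst hσ (hasDerivAt_coeffFst _ hz),
    fderiv_comp_uu_vv_projSnd hτ (hasDerivAt_coeffSnd _ hz)]
  have hM := gradDirNormSq_pos (vv z) hz
  simp only [coeffFst, coeffSnd, unitFieldDiv]
  field_simp
  unfold gradDirNormSq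
  push_cast
  ring

lemma two_sqrt_two_mul_gradDirNormSq_mul_sqrt_le {u v : ℝ} (hv : 0 ≤ v) (hvu : v < u) :
    2 * √2 * (gradDirNormSq u v * √(gradDirNormSq u v)) ≤ 343 * u ^ 4 * √u := by
  have hu : 0 < u := hv.trans_lt hvu
  have hM := gradDirNormSq_pos v hu
  have hMle : gradDirNormSq u v ≤ 49 * u ^ 3 / 2 := by
    unfold gradDirNormSq; nlinarith [mul_nonneg hu.le (mul_nonneg hv (sub_nonneg.2 hvu.le))]
  rw [← pow_le_pow_iff_left₀ (by positivity) (by positivity) two_ne_zero]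
  have hlhs : (2 * √2 * (gradDirNormSq u v * √(gradDirNormSq u v))) ^ 2 =
      8 * gradDirNormSq u v ^ 3 := by
    rw [mul_pow, mul_pow, mul_pow, Real.sq_sqrt zero_le_two, Real.sq_sqrt hM.le]; ring
  have hrhs : (343 * u ^ 4 * √u) ^ 2 = 8 * (49 * u ^ 3 / 2) ^ 3 := by
    rw [mul_pow, Real.sq_sqrt hu.le]; ring
  rw [hlhs, hrhs]
  gcongr

lemma le_unitFieldDiv {u v : ℝ} (hv : 0 ≤ v) (hvu : v < u) :
    2 * √2 / 343 * (√u - √v) / (u / 2 + v / 4) ≤ unitFieldDiv u v := by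
  have hu : 0 < u := hv.trans_lt hvu
  have hM := gradDirNormSq_pos v hu
  have hsq : √v < √u := Real.sqrt_lt_sqrt hv hvu
  have hdiff : u - v = (√u - √v) * (√u + √v) := by
    linear_combination -Real.sq_sqrt hu.le + Real.sq_sqrt hv
  have hP : 2 * u ^ 3 ≤ (49 * u ^ 2 - 72 * u * v + 27 * v ^ 2) * (2 * u + v) := by
    have hvu' := sub_nonneg.2 hvu.le
    nlinarith [mul_nonneg (mul_nonneg hv hv) hvu', mul_nonneg (mul_nonneg hv hv) hv,
      mul_nonneg (mul_nonneg hv hvu') hvu', mul_nonneg (mul_nonneg hvu' hvu') hvu']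
  rw [unitFieldDiv, div_le_div_iff₀ (by positivity) (by positivity)]
  calc 2 * √2 / 343 * (√u - √v) * (gradDirNormSq u v * √(gradDirNormSq u v))
      = (√u - √v) * (2 * √2 * (gradDirNormSq u v * √(gradDirNormSq u v))) / 343 := by ring
    _ ≤ (√u - √v) * (343 * u ^ 4 * √u) / 343 := by
      gcongr (√u - √v) * ?_ / 343
      exact two_sqrt_two_mul_gradDirNormSq_mul_sqrt_le hv hvu
    _ = (√u - √v) * u * √u * u ^ 3 := by ring
    _ ≤ (√u - √v) * u * (√u + √v) *
        ((49 * u ^ 2 - 72 * u * v + 27 * v ^ 2) * (2 * u + v) / 2) := by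
      gcongr (√u - √v) * u * ?_ * ?_
      · linarith [Real.sqrt_nonneg v]
      · linarith
    _ = 2 * u * (u - v) * (49 * u ^ 2 - 72 * u * v + 27 * v ^ 2) * (u / 2 + v / 4) := by
      rw [hdiff]; ring

/-- On `{u > v}`, the divergence of `g = ∇f₊/|∇f₊|` is at least
`(2√2/343)·(√u - √v)/|z|^2` (Section 3.4 of the paper, case `u > v`). -/
theorem stmt10 (z : EuclideanSpace ℝ (Fin (5 + 3))) (hz : vv z < uu z) :
    2 * Real.sqrt 2 / 343 * (Real.sqrt (uu z) - Real.sqrt (vv z)) / ‖z‖ ^ 2 ≤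
      divg (fun w => ‖gradient fp w‖⁻¹ • gradient fp w) z := by
  have hv : 0 ≤ vv z := by unfold vv; positivity
  have hu : 0 < uu z := hv.trans_lt hz
  have hfield : (fun w => ‖gradient fp w‖⁻¹ • gradient fp w) =ᶠ[nhds z] unitField :=
    (differentiable_uu.continuous.continuousAt.eventually (eventually_gt_nhds hu)).mono
      fun w hw => normalize_gradient_fp hw
  rw [divg, hfield.fderiv_eq, ← divg, divg_unitField hu, norm_sq_eq_uu_vv]
  exact le_unitFieldDiv hv hz
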